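/- arXiv:1303.2830 — 2 statements merged into one kernel-verified Lean document; each statement's English description precedes it below -/
import Mathlib

section
/- Let G be connected, γ ∈ (0,1), Q̄ = I − (γ/|E|)L, and P̄ = Q̄(I − (1/n)11ᵀ). Then ‖P̄‖₂ < 1, i.e., the spectral norm of the expected projected update matrix is strictly less than 1. -/
/-!
Let `J = I − (1/n)11ᵀ` and `c = γ/|E|`, so `P̄x = Q̄(Jx)` with `‖Jx‖² = ‖x‖² − (∑ x)²/n` and
`A(Jx) = Ax`. Since `⟨y, Ly⟩ = ‖Ay‖²` and, by Cauchy–Schwarz, `‖Aᵀz‖² ≤ (∑ A²)‖z‖² ≤ 2|E|‖z‖²`,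
expanding the square gives `‖Q̄y‖² ≤ ‖y‖² − 2c(1 − γ)‖Ay‖²`. Hence
`‖P̄x‖² ≤ ‖x‖² − (∑ x)²/n − 2c(1 − γ)‖Ax‖²`, and for `x ≠ 0` the loss is positive: if `Ax = 0`
then `x` is a nonzero constant vector. A linear map on a finite-dimensional space that strictly
shrinks every nonzero vector has norm `< 1`, since the unit sphere is compact.
-/

open Matrix

theorem LinearMap.exists_lt_one_norm_le_of_norm_lt_norm {E F : Type*}
    [NormedAddCommGroup E] [NormedSpace ℝ E] [FiniteDimensional ℝ E]
    [NormedAddCommGroup F] [NormedSpace ℝ F]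
    (f : E →ₗ[ℝ] F) (hf : ∀ x ≠ 0, ‖f x‖ < ‖x‖) :
    ∃ ρ, 0 ≤ ρ ∧ ρ < 1 ∧ ∀ x, ‖f x‖ ≤ ρ * ‖x‖ := by
  rcases subsingleton_or_nontrivial E with hE | hE
  · exact ⟨0, le_rfl, one_pos, fun x => by simp [Subsingleton.elim x 0]⟩
  obtain ⟨x₀, hx₀, hmax⟩ := (isCompact_sphere (0 : E) 1).exists_isMaxOn
    (NormedSpace.sphere_nonempty.mpr zero_le_one)
    f.continuous_of_finiteDimensional.norm.continuousOn
  rw [mem_sphere_zero_iff_norm] at hx₀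
  refine ⟨‖f x₀‖, norm_nonneg _, hx₀ ▸ hf x₀ (norm_ne_zero_iff.mp (by simp [hx₀])), fun x => ?_⟩
  rcases eq_or_ne x 0 with rfl | hx
  · simp
  have hxn : 0 < ‖x‖ := norm_pos_iff.mpr hx
  have hunit : ‖f (‖x‖⁻¹ • x)‖ ≤ ‖f x₀‖ := hmax (by simp [norm_smul, hxn.ne'])
  rw [map_smul, norm_smul, norm_inv, norm_norm, inv_mul_le_iff₀ hxn] at hunit
  linarith

theorem EuclideanSpace.real_norm_sq_eq_dotProduct {n : Type*} [Fintype n]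
    (x : EuclideanSpace ℝ n) : ‖x‖ ^ 2 = x.ofLp ⬝ᵥ x.ofLp := by
  rw [EuclideanSpace.real_norm_sq_eq]
  simp [dotProduct, sq]

namespace Matrix

variable {m n : Type*} [Fintype n]

theorem exists_lt_one_dotProduct_mulVec_le_of_lt [DecidableEq n] (M : Matrix n n ℝ)
    (hM : ∀ x ≠ 0, (M *ᵥ x) ⬝ᵥ (M *ᵥ x) < x ⬝ᵥ x) :
    ∃ ρ, 0 ≤ ρ ∧ ρ < 1 ∧ ∀ x, (M *ᵥ x) ⬝ᵥ (M *ᵥ x) ≤ ρ ^ 2 * (x ⬝ᵥ x) := by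
  obtain ⟨ρ, hρ0, hρ1, hρ⟩ := (toLpLin 2 2 M).exists_lt_one_norm_le_of_norm_lt_norm fun x hx => by
    rw [← sq_lt_sq₀ (norm_nonneg _) (norm_nonneg _), EuclideanSpace.real_norm_sq_eq_dotProduct,
      EuclideanSpace.real_norm_sq_eq_dotProduct]
    simpa using hM x.ofLp (by simpa using hx)
  refine ⟨ρ, hρ0, hρ1, fun x => ?_⟩
  have := pow_le_pow_left₀ (norm_nonneg _) (hρ (WithLp.toLp 2 x)) 2
  rwa [mul_pow, EuclideanSpace.real_norm_sq_eq_dotProduct,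
    EuclideanSpace.real_norm_sq_eq_dotProduct] at this

theorem transpose_mulVec_dotProduct_self_le [Fintype m] (A : Matrix m n ℝ) (z : m → ℝ) :
    (Aᵀ *ᵥ z) ⬝ᵥ (Aᵀ *ᵥ z) ≤ (∑ i, ∑ j, A i j ^ 2) * (z ⬝ᵥ z) := by
  simp only [dotProduct, mulVec, transpose_apply, ← sq]
  rw [Finset.sum_comm, Finset.sum_mul]
  exact Finset.sum_le_sum fun j _ => Finset.sum_mul_sq_le_sq_mul_sq _ _ _

theorem dotProduct_self_one_sub_smul_gram_mulVec_le [Fintype m] [DecidableEq n]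
    (A : Matrix m n ℝ) {c δ : ℝ} (hc : 0 ≤ c) (hcA : c * ∑ i, ∑ j, A i j ^ 2 ≤ 2 * δ)
    (y : n → ℝ) :
    ((1 - c • (Aᵀ * A)) *ᵥ y) ⬝ᵥ ((1 - c • (Aᵀ * A)) *ᵥ y) ≤
      y ⬝ᵥ y - 2 * c * (1 - δ) * ((A *ᵥ y) ⬝ᵥ (A *ᵥ y)) := by
  set z := A *ᵥ y
  have hQy : (1 - c • (Aᵀ * A)) *ᵥ y = y - c • (Aᵀ *ᵥ z) := by
    rw [sub_mulVec, one_mulVec, smul_mulVec, ← mulVec_mulVec]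
  have hcross : y ⬝ᵥ (Aᵀ *ᵥ z) = z ⬝ᵥ z := by
    rw [dotProduct_mulVec, vecMul_transpose]
  have hz : 0 ≤ z ⬝ᵥ z := Finset.sum_nonneg fun i _ => mul_self_nonneg (z i)
  have hgram := mul_le_mul_of_nonneg_left (transpose_mulVec_dotProduct_self_le A z) (sq_nonneg c)
  rw [hQy]
  simp only [sub_dotProduct, dotProduct_sub, smul_dotProduct, dotProduct_smul, smul_eq_mul,
    dotProduct_comm _ y, hcross]
  nlinarith [mul_le_mul_of_nonneg_right hcA (mul_nonneg hc hz)]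

theorem sum_ne_zero_or_mulVec_ne_zero {A : Matrix m n ℝ}
    (hker : LinearMap.ker A.mulVecLin = Submodule.span ℝ {1}) {x : n → ℝ} (hx : x ≠ 0) :
    ∑ i, x i ≠ 0 ∨ A *ᵥ x ≠ 0 := by
  by_contra! h
  obtain ⟨hsum, hAx⟩ := h
  obtain ⟨a, rfl⟩ := Submodule.mem_span_singleton.mp (hker ▸ hAx : x ∈ Submodule.span ℝ {1})
  obtain ⟨i, -⟩ := Function.ne_iff.mp hx
  have : Nonempty n := ⟨i⟩
  simp [Finset.card_univ, Fintype.card_ne_zero] at hsum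
  simp [hsum] at hx

theorem sum_sq_div_card_add_div_card_mul_dotProduct_pos [Fintype m] {A : Matrix m n ℝ}
    (hker : LinearMap.ker A.mulVecLin = Submodule.span ℝ {1}) {κ : ℝ} (hκ : 0 < κ) {x : n → ℝ}
    (hx : x ≠ 0) :
    0 < (∑ i, x i) ^ 2 / Fintype.card n + κ / Fintype.card m * ((A *ᵥ x) ⬝ᵥ (A *ᵥ x)) := by
  have hAx : 0 ≤ (A *ᵥ x) ⬝ᵥ (A *ᵥ x) := by simpa using dotProduct_star_self_nonneg (A *ᵥ x)
  rcases sum_ne_zero_or_mulVec_ne_zero hker hx with hsum | hAx'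
  · obtain ⟨i, -, -⟩ := Finset.exists_ne_zero_of_sum_ne_zero hsum
    have : Nonempty n := ⟨i⟩
    exact add_pos_of_pos_of_nonneg (by positivity) (by positivity)
  · obtain ⟨i, -⟩ := Function.ne_iff.mp hAx'
    have : Nonempty m := ⟨i⟩
    refine add_pos_of_nonneg_of_pos (by positivity) (mul_pos (by positivity) ?_)
    simpa using dotProduct_self_star_pos_iff.mpr hAx'

variable (n) [DecidableEq n]

noncomputable def centeringMatrix : Matrix n n ℝ :=
  1 - (Fintype.card n : ℝ)⁻¹ • vecMulVec 1 1

variable {n}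

theorem centeringMatrix_mulVec (x : n → ℝ) :
    centeringMatrix n *ᵥ x = x - ((Fintype.card n : ℝ)⁻¹ * ∑ i, x i) • 1 := by
  rw [centeringMatrix, sub_mulVec, one_mulVec, smul_mulVec, vecMulVec_mulVec, one_dotProduct,
    op_smul_eq_smul, smul_smul]

theorem dotProduct_self_centeringMatrix_mulVec (x : n → ℝ) :
    (centeringMatrix n *ᵥ x) ⬝ᵥ (centeringMatrix n *ᵥ x) =
      x ⬝ᵥ x - (∑ i, x i) ^ 2 / Fintype.card n := by
  rcases isEmpty_or_nonempty n with hn | hn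
  · simp [dotProduct]
  have hn : (Fintype.card n : ℝ) ≠ 0 := Nat.cast_ne_zero.mpr Fintype.card_ne_zero
  rw [centeringMatrix_mulVec]
  set s := (Fintype.card n : ℝ)⁻¹ * ∑ i, x i with hs
  rw [sub_dotProduct, dotProduct_sub, dotProduct_sub, smul_dotProduct, smul_dotProduct,
    dotProduct_smul, dotProduct_smul, dotProduct_one, one_dotProduct, one_dotProduct_one]
  simp only [smul_eq_mul, hs]
  field_simp
  ring

theorem mulVec_centeringMatrix_mulVec {A : Matrix m n ℝ} (hA : A *ᵥ 1 = 0) (x : n → ℝ) :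
    A *ᵥ (centeringMatrix n *ᵥ x) = A *ᵥ x := by
  rw [centeringMatrix_mulVec, mulVec_sub, mulVec_smul, hA, smul_zero, sub_zero]

end Matrix

def orientedIncidenceMatrix {E V : Type*} [DecidableEq V] (head tail : E → V) : Matrix E V ℝ :=
  of fun e w => if w = head e then 1 else if w = tail e then -1 else 0

theorem div_card_mul_sum_sq_orientedIncidenceMatrix_le {E V : Type*} [Fintype E] [Fintype V]
    [DecidableEq V] (head tail : E → V) {γ : ℝ} (hγ : 0 ≤ γ) :
    γ / Fintype.card E * ∑ e, ∑ v, orientedIncidenceMatrix head tail e v ^ 2 ≤ 2 * γ := by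
  have hrow (e : E) : ∑ v, orientedIncidenceMatrix head tail e v ^ 2 ≤ 2 := by
    calc ∑ v, orientedIncidenceMatrix head tail e v ^ 2
        ≤ ∑ v, ((if v = head e then 1 else 0) + (if v = tail e then 1 else 0)) := by
          gcongr with v
          simp only [orientedIncidenceMatrix, of_apply]
          split_ifs <;> norm_num
      _ = 2 := by simp [Finset.sum_add_distrib]; norm_num
  calc γ / Fintype.card E * ∑ e, ∑ v, orientedIncidenceMatrix head tail e v ^ 2
      ≤ γ / Fintype.card E * ∑ _e : E, 2 := by gcongr with e; exact hrow e
    _ = 2 * γ * (Fintype.card E / Fintype.card E) := by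
      rw [Finset.sum_const, Finset.card_univ, nsmul_eq_mul]
      ring
    _ ≤ 2 * γ := mul_le_of_le_one_right (by positivity) (div_self_le_one _)

theorem expected_projected_matrix_spectral_norm_lt_one_general
    {V E : Type*} [Fintype V] [Fintype E] [DecidableEq V]
    (head tail : E → V)
    (A : Matrix E V ℝ)
    (hA : ∀ e w, A e w = if w = head e then 1 else if w = tail e then -1 else 0)
    (hconn : LinearMap.ker A.mulVecLin = Submodule.span ℝ {(fun _ => 1 : V → ℝ)})
    (γ : ℝ) (hγ : γ ∈ Set.Ioo (0 : ℝ) 1)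
    (L Qbar Pbar : Matrix V V ℝ) (hL : L = Aᵀ * A)
    (hQbar : Qbar = 1 - (γ / (Fintype.card E : ℝ)) • L)
    (hPbar : Pbar = Qbar *
      (1 - ((Fintype.card V : ℝ))⁻¹ • vecMulVec (fun _ => 1) (fun _ => 1))) :
    ∃ ρ : ℝ, 0 ≤ ρ ∧ ρ < 1 ∧
      ∀ x : V → ℝ, ∑ v, (Pbar.mulVec x v) ^ 2 ≤ ρ ^ 2 * ∑ v, (x v) ^ 2 := by
  obtain ⟨hγ0, hγ1⟩ := hγ
  rw [← Pi.one_def] at hconn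
  have hA1 : A *ᵥ 1 = 0 := LinearMap.mem_ker.mp (hconn ▸ Submodule.mem_span_singleton_self _)
  have hcA : γ / Fintype.card E * ∑ e, ∑ v, A e v ^ 2 ≤ 2 * γ := by
    rw [show A = orientedIncidenceMatrix head tail from Matrix.ext hA]
    exact div_card_mul_sum_sq_orientedIncidenceMatrix_le head tail hγ0.le
  have hdecay (x : V → ℝ) : (Pbar *ᵥ x) ⬝ᵥ (Pbar *ᵥ x) ≤ x ⬝ᵥ x - (∑ v, x v) ^ 2 / Fintype.card V
      - 2 * (γ / Fintype.card E) * (1 - γ) * ((A *ᵥ x) ⬝ᵥ (A *ᵥ x)) := by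
    have := dotProduct_self_one_sub_smul_gram_mulVec_le A (by positivity) hcA
      (centeringMatrix V *ᵥ x)
    rwa [mulVec_centeringMatrix_mulVec hA1, dotProduct_self_centeringMatrix_mulVec, mulVec_mulVec,
      ← hL, ← hQbar, centeringMatrix, Pi.one_def, ← hPbar] at this
  obtain ⟨ρ, hρ0, hρ1, hρ⟩ := Pbar.exists_lt_one_dotProduct_mulVec_le_of_lt fun x hx => by
    have hloss := sum_sq_div_card_add_div_card_mul_dotProduct_pos hconn
      (κ := 2 * γ * (1 - γ)) (by nlinarith) hx
    rw [show 2 * γ * (1 - γ) / Fintype.card E = 2 * (γ / Fintype.card E) * (1 - γ) by ring]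
      at hloss
    linarith [hdecay x]
  exact ⟨ρ, hρ0, hρ1, fun x => by simpa [dotProduct, sq] using hρ x⟩

/-- For a connected graph and `γ ∈ (0,1)`, with
`Q̄ = I − (γ/|E|)L` and `P̄ = Q̄(I − (1/n)11ᵀ)`, the spectral norm of `P̄` is
strictly less than `1`: there is `ρ < 1` with `‖P̄x‖₂ ≤ ρ‖x‖₂` for all `x`. -/
theorem expected_projected_matrix_spectral_norm_lt_one
    {V E : Type*} [Fintype V] [Fintype E] [DecidableEq V] [Nonempty V]
    (head tail : E → V) (hht : ∀ e, head e ≠ tail e)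
    (A : Matrix E V ℝ)
    (hA : ∀ e w, A e w = if w = head e then 1 else if w = tail e then -1 else 0)
    (hconn : LinearMap.ker A.mulVecLin = Submodule.span ℝ {(fun _ => 1 : V → ℝ)})
    (γ : ℝ) (hγ : γ ∈ Set.Ioo (0 : ℝ) 1)
    (L Qbar Pbar : Matrix V V ℝ) (hL : L = Aᵀ * A)
    (hQbar : Qbar = 1 - (γ / (Fintype.card E : ℝ)) • L)
    (hPbar : Pbar = Qbar *
      (1 - ((Fintype.card V : ℝ))⁻¹ • vecMulVec (fun _ => 1) (fun _ => 1))) :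
    ∃ ρ : ℝ, 0 ≤ ρ ∧ ρ < 1 ∧
      ∀ x : V → ℝ, ∑ v, (Pbar.mulVec x v) ^ 2 ≤ ρ ^ 2 * ∑ v, (x v) ^ 2 :=
  expected_projected_matrix_spectral_norm_lt_one_general head tail A hA hconn γ hγ L Qbar Pbar hL
    hQbar hPbar
end

section
/- Let G be connected, P̄ = (I − (γ/|E|)L)(I − (1/n)11ᵀ) and ȳ = (γ/|E|)Aᵀb. Then the unique fixed point of x ↦ P̄x + ȳ in the subspace 1^⊥ is x⋆ = L†Aᵀb; consequently (I − P̄)^{−1} ȳ = L† Aᵀ b. -/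
open Matrix BigOperators

/-- For a connected graph, with
`P̄ = (I − (γ/|E|)L)(I − (1/n)11ᵀ)` and `ȳ = (γ/|E|)Aᵀb`, the unique fixed
point of `x ↦ P̄x + ȳ` in the subspace `1^⊥` is `x⋆ = L†Aᵀb`; consequently
`(I − P̄)⁻¹ ȳ = L† Aᵀ b`. -/
theorem fixed_point_is_least_squares_solution
    {V E : Type*} [Fintype V] [Fintype E] [DecidableEq V] [Nonempty V]
    (head tail : E → V) (hht : ∀ e, head e ≠ tail e)
    (A : Matrix E V ℝ)
    (hA : ∀ e w, A e w = if w = head e then 1 else if w = tail e then -1 else 0)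
    (hconn : LinearMap.ker A.mulVecLin = Submodule.span ℝ {(fun _ => 1 : V → ℝ)})
    (b : E → ℝ) (γ : ℝ) (hγ : γ ∈ Set.Ioo (0 : ℝ) 1)
    (L Ldag Pbar : Matrix V V ℝ) (hL : L = Aᵀ * A)
    (hp1 : L * Ldag * L = L) (hp2 : Ldag * L * Ldag = Ldag)
    (hp3 : (L * Ldag)ᵀ = L * Ldag) (hp4 : (Ldag * L)ᵀ = Ldag * L)
    (hPbar : Pbar = (1 - (γ / (Fintype.card E : ℝ)) • L) *
      (1 - ((Fintype.card V : ℝ))⁻¹ • vecMulVec (fun _ => 1) (fun _ => 1)))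
    (ybar : V → ℝ) (hybar : ybar = (γ / (Fintype.card E : ℝ)) • Aᵀ.mulVec b)
    (xstar : V → ℝ) (hxstar : xstar = Ldag.mulVec (Aᵀ.mulVec b)) :
    (∑ v, xstar v = 0) ∧ Pbar.mulVec xstar + ybar = xstar ∧
      (∀ z : V → ℝ, (∑ v, z v = 0) → Pbar.mulVec z + ybar = z → z = xstar) ∧
      (1 - Pbar)⁻¹.mulVec ybar = xstar := by
  obtain ⟨hγ0, hγ1⟩ := hγ
  set c : ℝ := γ / (Fintype.card E : ℝ) with hc
  have hc0 : 0 ≤ c := div_nonneg hγ0.le (Nat.cast_nonneg _)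
  have hn0 : (0 : ℝ) < (Fintype.card V : ℝ) := by
    exact_mod_cast Fintype.card_pos
  -- row sums of A are zero
  have hA1 : A *ᵥ (fun _ => (1:ℝ)) = 0 := by
    funext e
    simp only [mulVec, dotProduct, mul_one, Pi.zero_apply]
    have hrw : ∀ w, A e w = (if w = head e then (1:ℝ) else 0) +
        (if w = tail e then -1 else 0) := by
      intro w
      rw [hA]
      by_cases h1 : w = head e
      · have h2 : w ≠ tail e := by rw [h1]; exact hht e
        simp [h1, h2, hht e]
      · by_cases h2 : w = tail e <;> simp [h1, h2, hht e, (hht e).symm]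
    simp [hrw, Finset.sum_add_distrib]
  have hLsym : Lᵀ = L := by rw [hL, transpose_mul, transpose_transpose]
  have hL1 : L *ᵥ (fun _ => (1:ℝ)) = 0 := by
    rw [hL, ← mulVec_mulVec, hA1, mulVec_zero]
  -- ker L ⊆ ker A
  have hker : ∀ x : V → ℝ, L *ᵥ x = 0 → A *ᵥ x = 0 := by
    intro x hx
    have h2 : x ⬝ᵥ (L *ᵥ x) = (A *ᵥ x) ⬝ᵥ (A *ᵥ x) := by
      rw [hL, ← mulVec_mulVec, dotProduct_mulVec, vecMul_transpose]
    rw [hx, dotProduct_zero] at h2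
    exact dotProduct_self_eq_zero.mp h2.symm
  -- ker A ⊆ span 1
  have hkerA : ∀ x : V → ℝ, A *ᵥ x = 0 → ∃ t : ℝ, x = fun _ => t := by
    intro x hx
    have hmem : x ∈ LinearMap.ker A.mulVecLin := by
      simpa [Matrix.mulVecLin_apply] using hx
    rw [hconn, Submodule.mem_span_singleton] at hmem
    obtain ⟨t, ht⟩ := hmem
    exact ⟨t, by rw [← ht]; funext v; simp⟩
  -- key: L * Ldag * Aᵀ = Aᵀ
  have hLtdL : L * (Ldagᵀ * L) = L := by
    have h := congrArg transpose hp1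
    simpa [transpose_mul, hLsym, Matrix.mul_assoc] using h
  have hcancel : ∀ M : Matrix V V ℝ, L * M = 0 → A * M = 0 := by
    intro M h
    ext i j
    have h2 : A *ᵥ (M *ᵥ Pi.single j 1) = 0 := by
      apply hker
      rw [mulVec_mulVec, h, zero_mulVec]
    rw [mulVec_mulVec] at h2
    have h3 := congrFun h2 i
    simpa [mulVec_single] using h3
  have hkey : A * (Ldagᵀ * L) = A := by
    have h0 : L * (Ldagᵀ * L - 1) = 0 := by
      rw [Matrix.mul_sub, Matrix.mul_one, hLtdL, sub_self]
    have h1 := hcancel _ h0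
    rw [Matrix.mul_sub, Matrix.mul_one, sub_eq_zero] at h1
    exact h1
  have hproj : L * Ldag * Aᵀ = Aᵀ := by
    have h := congrArg transpose hkey
    simpa [transpose_mul, transpose_transpose, hLsym, Matrix.mul_assoc] using h
  have hLx : L *ᵥ xstar = Aᵀ *ᵥ b := by
    rw [hxstar]
    show L *ᵥ (Ldag *ᵥ (Aᵀ *ᵥ b)) = Aᵀ *ᵥ b
    rw [mulVec_mulVec, mulVec_mulVec, hproj]
  -- sum of xstar is zero
  have hLdt1 : Ldagᵀ *ᵥ (fun _ => (1:ℝ)) = 0 := by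
    have h1 : Ldagᵀ = Ldagᵀ * (Ldag * L) := by
      conv_lhs => rw [← hp2]
      rw [transpose_mul, hp4]
    rw [h1, ← mulVec_mulVec, ← mulVec_mulVec, hL1, mulVec_zero, mulVec_zero]
  have hsum : ∑ v, xstar v = 0 := by
    have h1 : (fun _ => (1:ℝ)) ⬝ᵥ xstar = 0 := by
      rw [hxstar, dotProduct_mulVec]
      have h2 : (fun _ => (1:ℝ)) ᵥ* Ldag = 0 := by
        rw [← transpose_transpose Ldag, vecMul_transpose, hLdt1]
      rw [h2, zero_dotProduct]
    simpa [dotProduct] using h1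
  -- the matrix M = 1 - Pbar
  set K : Matrix V V ℝ := vecMulVec (fun _ => 1) (fun _ => 1) with hK
  have hLK : L * K = 0 := by
    ext i j
    have h := congrFun hL1 i
    simp only [mulVec, dotProduct, mul_one, Pi.zero_apply] at h
    simp only [Matrix.mul_apply, hK, vecMulVec_apply, mul_one, Matrix.zero_apply]
    exact h
  have hM : (1 : Matrix V V ℝ) - Pbar =
      ((Fintype.card V : ℝ))⁻¹ • K + c • L := by
    rw [hPbar, Matrix.sub_mul, Matrix.one_mul, Matrix.mul_sub, Matrix.mul_one,
      Matrix.smul_mul, Matrix.mul_smul, hLK]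
    simp only [smul_zero]
    abel
  have hKx : K *ᵥ xstar = 0 := by
    funext i
    simp only [hK, mulVec, dotProduct, vecMulVec_apply, one_mul, Pi.zero_apply]
    simpa using hsum
  have hMx : ((1 : Matrix V V ℝ) - Pbar) *ᵥ xstar = ybar := by
    rw [hM, add_mulVec, smul_mulVec, smul_mulVec, hKx, hLx,
      smul_zero, zero_add, hybar]
  have hfix : Pbar *ᵥ xstar + ybar = xstar := by
    rw [sub_mulVec, one_mulVec] at hMx
    rw [← hMx]; abel
  -- injectivity of 1 - Pbar
  have hinj : ∀ x : V → ℝ, ((1 : Matrix V V ℝ) - Pbar) *ᵥ x = 0 → x = 0 := by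
    intro x hx
    rw [hM] at hx
    have h0 : x ⬝ᵥ ((((Fintype.card V : ℝ))⁻¹ • K + c • L) *ᵥ x) = 0 := by
      rw [hx, dotProduct_zero]
    rw [add_mulVec, smul_mulVec, smul_mulVec, dotProduct_add,
      dotProduct_smul, dotProduct_smul] at h0
    have h1 : x ⬝ᵥ (K *ᵥ x) = ((fun _ => (1:ℝ)) ⬝ᵥ x)^2 := by
      simp only [hK, mulVec, dotProduct, vecMulVec_apply, one_mul, sq]
      rw [← Finset.sum_mul]
    have h2 : x ⬝ᵥ (L *ᵥ x) = (A *ᵥ x) ⬝ᵥ (A *ᵥ x) := by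
      rw [hL, ← mulVec_mulVec, dotProduct_mulVec, vecMul_transpose]
    rw [h1, h2, smul_eq_mul, smul_eq_mul] at h0
    have hq1 : (0:ℝ) ≤ ((fun _ => (1:ℝ)) ⬝ᵥ x)^2 := sq_nonneg _
    have hq2 : (0:ℝ) ≤ (A *ᵥ x) ⬝ᵥ (A *ᵥ x) :=
      Finset.sum_nonneg fun i _ => mul_self_nonneg _
    have hninv : (0:ℝ) < ((Fintype.card V : ℝ))⁻¹ := by positivity
    set S : ℝ := (fun _ => (1:ℝ)) ⬝ᵥ x with hS
    set Q : ℝ := (A *ᵥ x) ⬝ᵥ (A *ᵥ x) with hQ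
    have ha : (0:ℝ) ≤ ((Fintype.card V : ℝ))⁻¹ * S^2 := mul_nonneg hninv.le hq1
    have hb : (0:ℝ) ≤ c * Q := mul_nonneg hc0 hq2
    have ha0 : ((Fintype.card V : ℝ))⁻¹ * S^2 = 0 := by linarith
    have hsum0 : S = 0 := by
      rcases mul_eq_zero.mp ha0 with h | h
      · exact absurd h (ne_of_gt hninv)
      · exact pow_eq_zero_iff (by norm_num) |>.mp h
    have hAx : A *ᵥ x = 0 := by
      rcases isEmpty_or_nonempty E with hE | hE
      · exact funext fun e => (hE.false e).elim
      · have hcpos : 0 < c := by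
          have hE0 : (0:ℝ) < (Fintype.card E : ℝ) := by exact_mod_cast Fintype.card_pos
          exact div_pos hγ0 hE0
        have hcQ : c * Q = 0 := by linarith
        have hQ0 : Q = 0 := by
          rcases mul_eq_zero.mp hcQ with h | h
          · exact absurd h (ne_of_gt hcpos)
          · exact h
        exact dotProduct_self_eq_zero.mp hQ0
    obtain ⟨t, ht⟩ := hkerA x hAx
    have hts : (Fintype.card V : ℝ) * t = 0 := by
      have := hsum0
      rw [hS] at this
      simp only [dotProduct, one_mul, ht] at this
      simpa [Finset.sum_const, nsmul_eq_mul] using this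
    have ht0 : t = 0 := by
      rcases mul_eq_zero.mp hts with h | h
      · exact absurd h (ne_of_gt hn0)
      · exact h
    rw [ht, ht0]; rfl
  have huniq : ∀ z : V → ℝ, Pbar *ᵥ z + ybar = z → z = xstar := by
    intro z hz
    have hz' : ((1 : Matrix V V ℝ) - Pbar) *ᵥ z = ybar := by
      rw [sub_mulVec, one_mulVec]
      nth_rewrite 1 [← hz]
      abel
    have hd : ((1 : Matrix V V ℝ) - Pbar) *ᵥ (z - xstar) = 0 := by
      rw [mulVec_sub, hz', hMx, sub_self]
    have := hinj _ hd
    exact sub_eq_zero.mp this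
  have hdet : IsUnit ((1 : Matrix V V ℝ) - Pbar).det := by
    rw [isUnit_iff_ne_zero]
    intro h0
    obtain ⟨v, hv0, hv⟩ := Matrix.exists_mulVec_eq_zero_iff.mpr h0
    exact hv0 (hinj v hv)
  have hinv : ((1 : Matrix V V ℝ) - Pbar)⁻¹ *ᵥ ybar = xstar := by
    rw [← hMx, mulVec_mulVec, Matrix.nonsing_inv_mul _ hdet, one_mulVec]
  exact ⟨hsum, hfix, fun z _ hz => huniq z hz, hinv⟩
end
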